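/- The function u : [0,1] → ℝ² defined by the dyadic spiral (u(2^{-4k}) = (-2^{-2k}, 2^{-2k}), u(2^{-(4k+1)}) = (-2^{-2k}, -2^{-2k-1}), u(2^{-(4k+2)}) = (2^{-2k-1}, -2^{-2k-1}), u(2^{-(4k+3)}) = (2^{-2k-1}, 2^{-2k-2}), u(0)=0, linear interpolation in between) has bounded variation on [0,1], and each coordinate u_j can be written as m_j - m̄_j, a difference of two continuous non-decreasing functions starting at 0. -/

import Mathlib

open Set Matrix

/-- The vertices of Mandelbaum's dyadic spiral: `SpiralP n` is the value of the
spiral at the dyadic time `2 ^ (-n)`. -/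
noncomputable def SpiralP (n : ℕ) : Fin 2 → ℝ :=
  let k : ℤ := (n / 4 : ℕ)
  if n % 4 = 0 then ![-(2:ℝ) ^ (-2 * k), (2:ℝ) ^ (-2 * k)]
  else if n % 4 = 1 then ![-(2:ℝ) ^ (-2 * k), -(2:ℝ) ^ (-2 * k - 1)]
  else if n % 4 = 2 then ![(2:ℝ) ^ (-2 * k - 1), -(2:ℝ) ^ (-2 * k - 1)]
  else ![(2:ℝ) ^ (-2 * k - 1), (2:ℝ) ^ (-2 * k - 2)]

/-- `u : [0,1] → ℝ²` is the dyadic spiral: `u 0 = 0`, `u (2 ^ (-n)) = SpiralP n`,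
with linear interpolation on each interval `[2 ^ (-(n+1)), 2 ^ (-n)]`. -/
def IsSpiral (u : ℝ → Fin 2 → ℝ) : Prop :=
  u 0 = 0 ∧
  ∀ n : ℕ, ∀ s ∈ Set.Icc (0:ℝ) 1,
    u ((1 - s) * (2:ℝ) ^ (-(n:ℤ) - 1) + s * (2:ℝ) ^ (-(n:ℤ)))
      = fun j => (1 - s) * SpiralP (n + 1) j + s * SpiralP n j

/-!
Let `ρₙ` be the ramp that is `0` before `2^{-(n+1)}`, rises linearly to `1` at `2^{-n}` and stays
`1` afterwards. A coordinate of the spiral changes by `cₙ = Pₙ - Pₙ₊₁` on `[2^{-(n+1)}, 2^{-n}]`,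
so it equals `∑ cₙ ρₙ`: the ramps below level `n` vanish there and the tail telescopes, since the
vertices `Pₙ` tend to `0`. They do so geometrically (`|Pₙ| ≤ 4^{-⌊n/4⌋}`), hence `∑ |cₙ| < ∞`, and
splitting `cₙ` into positive and negative parts exhibits the coordinate as the difference of two
uniformly convergent series of continuous nondecreasing ramps. Bounded variation of `u` follows
coordinatewise.
-/

open Filter Topology

theorem hasSum_sub_succ {G : Type*} [AddCommGroup G] [TopologicalSpace G]
    [IsTopologicalAddGroup G] [T2Space G] {P : ℕ → G} {l : G}
    (hs : Summable fun n => P n - P (n + 1)) (hP : Tendsto P atTop (𝓝 l)) :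
    HasSum (fun n => P n - P (n + 1)) (P 0 - l) := by
  rw [hs.hasSum_iff_tendsto_nat]
  simp_rw [Finset.sum_range_sub']
  exact tendsto_const_nhds.sub hP

lemma summable_abs_sub_succ {P : ℕ → ℝ} (hP : Summable fun n => |P n|) :
    Summable fun n => |P n - P (n + 1)| :=
  (hP.add ((summable_nat_add_iff 1).2 hP)).of_nonneg_of_le (fun _ => abs_nonneg _)
    fun _ => abs_sub _ _

section Variation

variable {α F ι : Type*} [LinearOrder α] [PseudoEMetricSpace F]

theorem eVariationOn_le_sum_of_edist_le {E : Type*} [PseudoEMetricSpace E] {f : α → E}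
    {g : ι → α → F} {s : Set α} (I : Finset ι)
    (h : ∀ x ∈ s, ∀ y ∈ s, edist (f x) (f y) ≤ ∑ i ∈ I, edist (g i x) (g i y)) :
    eVariationOn f s ≤ ∑ i ∈ I, eVariationOn (g i) s := by
  refine iSup_le fun ⟨n, u, hu, us⟩ => ?_
  calc ∑ k ∈ Finset.range n, edist (f (u (k + 1))) (f (u k))
      ≤ ∑ k ∈ Finset.range n, ∑ i ∈ I, edist (g i (u (k + 1))) (g i (u k)) :=
        Finset.sum_le_sum fun k _ => h _ (us _) _ (us _)
    _ = ∑ i ∈ I, ∑ k ∈ Finset.range n, edist (g i (u (k + 1))) (g i (u k)) := Finset.sum_comm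
    _ ≤ ∑ i ∈ I, eVariationOn (g i) s :=
        Finset.sum_le_sum fun i _ => eVariationOn.sum_le hu us

theorem BoundedVariationOn.pi [Fintype ι] {f : α → ι → F} {s : Set α}
    (hf : ∀ i, BoundedVariationOn (fun x => f x i) s) : BoundedVariationOn f s := by
  refine ne_top_of_le_ne_top (ENNReal.sum_ne_top.2 fun i _ => hf i)
    (eVariationOn_le_sum_of_edist_le Finset.univ fun x _ y _ => edist_pi_le_iff.2 fun i => ?_)
  exact Finset.single_le_sum (f := fun i => edist (f x i) (f y i)) (fun _ _ => zero_le)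
    (Finset.mem_univ i)

theorem BoundedVariationOn.sub {G : Type*} [SeminormedAddCommGroup G] {f g : α → G} {s : Set α}
    (hf : BoundedVariationOn f s) (hg : BoundedVariationOn g s) :
    BoundedVariationOn (f - g) s := by
  refine ne_top_of_le_ne_top (ENNReal.sum_ne_top.2 fun i _ => ?_)
    (eVariationOn_le_sum_of_edist_le (g := ![f, g]) Finset.univ fun x _ y _ => ?_)
  · fin_cases i
    exacts [hf, hg]
  · simpa [sub_eq_add_neg] using edist_add_add_le (f x) (-g x) (f y) (-g y)

theorem Monotone.boundedVariationOn_Icc {f : α → ℝ} (hf : Monotone f) (a b : α) :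
    BoundedVariationOn f (Icc a b) := by
  simpa using (hf.monotoneOn univ).locallyBoundedVariationOn a b (mem_univ a) (mem_univ b)

end Variation

section DyadicRamp

noncomputable def dyadicRamp (n : ℕ) (t : ℝ) : ℝ :=
  projIcc (0 : ℝ) 1 zero_le_one (2 ^ (n + 1) * t - 1)

lemma continuous_dyadicRamp (n : ℕ) : Continuous (dyadicRamp n) :=
  continuous_subtype_val.comp (continuous_projIcc.comp (by fun_prop))

lemma monotone_dyadicRamp (n : ℕ) : Monotone (dyadicRamp n) := fun _ _ hst =>
  Subtype.mono_coe _ <| monotone_projIcc zero_le_one <| by gcongr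

lemma dyadicRamp_mem_Icc (n : ℕ) (t : ℝ) : dyadicRamp n t ∈ Icc 0 1 :=
  Subtype.property _

lemma dyadicRamp_of_le {n : ℕ} {t : ℝ} (ht : 2 ^ (n + 1) * t ≤ 1) : dyadicRamp n t = 0 := by
  simp [dyadicRamp, projIcc_of_le_left zero_le_one (sub_nonpos.2 ht)]

lemma dyadicRamp_of_ge {n : ℕ} {t : ℝ} (ht : 2 ≤ 2 ^ (n + 1) * t) : dyadicRamp n t = 1 := by
  simp [dyadicRamp, projIcc_of_right_le zero_le_one (by linarith : (1 : ℝ) ≤ 2 ^ (n + 1) * t - 1)]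

variable {s : ℝ}

lemma dyadicRamp_apply_self (n : ℕ) (hs : s ∈ Icc 0 1) :
    dyadicRamp n ((1 + s) / 2 ^ (n + 1)) = s := by
  have : 2 ^ (n + 1) * ((1 + s) / 2 ^ (n + 1)) - 1 = s := by field_simp; ring
  simp [dyadicRamp, this, projIcc_of_mem zero_le_one hs]

lemma dyadicRamp_apply_of_lt {k n : ℕ} (hkn : k < n) (hs : s ∈ Icc 0 1) :
    dyadicRamp k ((1 + s) / 2 ^ (n + 1)) = 0 := by
  apply dyadicRamp_of_le
  have : (2 : ℝ) ^ (k + 1) ≤ 2 ^ n := pow_le_pow_right₀ one_le_two hkn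
  have : 0 ≤ 1 + s := by linarith [hs.1]
  calc (2 : ℝ) ^ (k + 1) * ((1 + s) / 2 ^ (n + 1))
      ≤ 2 ^ n * ((1 + s) / 2 ^ (n + 1)) := by gcongr
    _ = (1 + s) / 2 := by field_simp; ring
    _ ≤ 1 := by linarith [hs.2]

lemma dyadicRamp_apply_of_gt {k n : ℕ} (hnk : n < k) (hs : s ∈ Icc 0 1) :
    dyadicRamp k ((1 + s) / 2 ^ (n + 1)) = 1 := by
  apply dyadicRamp_of_ge
  have : (2 : ℝ) ^ (n + 2) ≤ 2 ^ (k + 1) := pow_le_pow_right₀ one_le_two (by omega)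
  have : 0 ≤ 1 + s := by linarith [hs.1]
  calc (2 : ℝ) ≤ 2 * (1 + s) := by linarith [hs.1]
    _ = 2 ^ (n + 2) * ((1 + s) / 2 ^ (n + 1)) := by field_simp; ring
    _ ≤ 2 ^ (k + 1) * ((1 + s) / 2 ^ (n + 1)) := by gcongr

end DyadicRamp

noncomputable def dyadicSeries (c : ℕ → ℝ) (t : ℝ) : ℝ :=
  ∑' n, c n * dyadicRamp n t

section DyadicSeries

variable {c d : ℕ → ℝ}

lemma dyadicSeries_apply_zero (c : ℕ → ℝ) : dyadicSeries c 0 = 0 := by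
  simp [dyadicSeries, dyadicRamp_of_le]

lemma norm_mul_dyadicRamp_le (c : ℕ → ℝ) (n : ℕ) (t : ℝ) :
    ‖c n * dyadicRamp n t‖ ≤ |c n| := by
  have h := dyadicRamp_mem_Icc n t
  rw [norm_mul, Real.norm_eq_abs, Real.norm_eq_abs, abs_of_nonneg h.1]
  exact mul_le_of_le_one_right (abs_nonneg _) h.2

lemma summable_mul_dyadicRamp (hc : Summable fun n => |c n|) (t : ℝ) :
    Summable fun n => c n * dyadicRamp n t :=
  hc.of_norm_bounded (norm_mul_dyadicRamp_le c · t)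

lemma continuous_dyadicSeries (hc : Summable fun n => |c n|) : Continuous (dyadicSeries c) :=
  continuous_tsum (fun n => (continuous_dyadicRamp n).const_mul _) hc (norm_mul_dyadicRamp_le c)

lemma monotone_dyadicSeries (hc : Summable c) (hc0 : ∀ n, 0 ≤ c n) :
    Monotone (dyadicSeries c) := by
  have hc' : Summable fun n => |c n| := by simpa [abs_of_nonneg (hc0 _)] using hc
  intro s t hst
  exact (summable_mul_dyadicRamp hc' s).tsum_le_tsum
    (fun n => mul_le_mul_of_nonneg_left (monotone_dyadicRamp n hst) (hc0 n))
    (summable_mul_dyadicRamp hc' t)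

lemma dyadicSeries_sub (hc : Summable fun n => |c n|) (hd : Summable fun n => |d n|) (t : ℝ) :
    dyadicSeries (fun n => c n - d n) t = dyadicSeries c t - dyadicSeries d t := by
  simp only [dyadicSeries, sub_mul]
  exact (summable_mul_dyadicRamp hc t).tsum_sub (summable_mul_dyadicRamp hd t)

theorem dyadicSeries_sub_succ_apply {P : ℕ → ℝ} (hP : Summable fun n => |P n - P (n + 1)|)
    (hlim : Tendsto P atTop (𝓝 0)) (n : ℕ) {s : ℝ} (hs : s ∈ Icc 0 1) :
    dyadicSeries (fun k => P k - P (k + 1)) ((1 + s) / 2 ^ (n + 1)) =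
      (1 - s) * P (n + 1) + s * P n := by
  set t := (1 + s) / 2 ^ (n + 1)
  have htail : ∑' k, (P (k + (n + 1)) - P (k + (n + 1) + 1)) * dyadicRamp (k + (n + 1)) t =
      P (n + 1) := by
    have hsum := hasSum_sub_succ (P := fun k => P (k + (n + 1)))
      (by simpa only [Nat.add_right_comm _ 1] using (summable_nat_add_iff (n + 1)).2 hP.of_abs)
      (hlim.comp (tendsto_add_atTop_nat _))
    simp only [Nat.add_right_comm _ 1, zero_add, sub_zero] at hsum
    rw [← hsum.tsum_eq]
    exact tsum_congr fun k => by rw [dyadicRamp_apply_of_gt (by omega) hs, mul_one]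
  rw [dyadicSeries, ← (summable_mul_dyadicRamp hP t).sum_add_tsum_nat_add (n + 1),
    Finset.sum_range_succ, htail, dyadicRamp_apply_self n hs,
    Finset.sum_eq_zero fun k hk => by
      rw [dyadicRamp_apply_of_lt (Finset.mem_range.1 hk) hs, mul_zero]]
  ring

theorem exists_continuous_monotone_sub_eq_dyadicSeries (hc : Summable fun n => |c n|) :
    ∃ m mbar : ℝ → ℝ, Continuous m ∧ Continuous mbar ∧ Monotone m ∧ Monotone mbar ∧
      m 0 = 0 ∧ mbar 0 = 0 ∧ dyadicSeries c = m - mbar := by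
  have hpos : Summable fun n => |(c n)⁺| := hc.of_nonneg_of_le (fun _ => abs_nonneg _) fun n => by
    rw [abs_of_nonneg (posPart_nonneg _), ← posPart_add_negPart]
    exact le_add_of_nonneg_right (negPart_nonneg _)
  have hneg : Summable fun n => |(c n)⁻| := hc.of_nonneg_of_le (fun _ => abs_nonneg _) fun n => by
    rw [abs_of_nonneg (negPart_nonneg _), ← posPart_add_negPart]
    exact le_add_of_nonneg_left (posPart_nonneg _)
  refine ⟨dyadicSeries fun n => (c n)⁺, dyadicSeries fun n => (c n)⁻,
    continuous_dyadicSeries hpos, continuous_dyadicSeries hneg,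
    monotone_dyadicSeries hpos.of_abs fun _ => posPart_nonneg _,
    monotone_dyadicSeries hneg.of_abs fun _ => negPart_nonneg _,
    dyadicSeries_apply_zero _, dyadicSeries_apply_zero _, funext fun t => ?_⟩
  rw [Pi.sub_apply, ← dyadicSeries_sub hpos hneg]
  simp only [posPart_sub_negPart]

end DyadicSeries

lemma exists_eq_one_add_div_two_pow {t : ℝ} (ht : t ∈ Ioc 0 1) :
    ∃ n : ℕ, ∃ s ∈ Icc (0 : ℝ) 1, t = (1 + s) / 2 ^ (n + 1) := by
  obtain ⟨n, hlt, hle⟩ := exists_nat_pow_near_of_lt_one ht.1 ht.2 one_half_pos one_half_lt_one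
  rw [_root_.one_div_pow] at hlt hle
  rw [div_lt_iff₀' (by positivity)] at hlt
  rw [le_div_iff₀' (by positivity)] at hle
  refine ⟨n, 2 ^ (n + 1) * t - 1, ⟨by linarith, ?_⟩, by field_simp; ring⟩
  rw [pow_succ]
  linarith

lemma one_sub_mul_add_mul_two_zpow (n : ℕ) (s : ℝ) :
    (1 - s) * (2 : ℝ) ^ (-(n : ℤ) - 1) + s * 2 ^ (-(n : ℤ)) = (1 + s) / 2 ^ (n + 1) := by
  rw [show -(n : ℤ) - 1 = -((n + 1 : ℕ) : ℤ) by push_cast; ring, _root_.zpow_neg, _root_.zpow_neg,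
    zpow_natCast, zpow_natCast, pow_succ]
  field_simp
  ring

lemma abs_spiralP_le (n : ℕ) (j : Fin 2) : |SpiralP n j| ≤ (1 / 4 : ℝ) ^ (n / 4) := by
  have hq : (2 : ℝ) ^ (-2 * ((n / 4 : ℕ) : ℤ)) = (1 / 4) ^ (n / 4) := by
    rw [_root_.zpow_mul, zpow_natCast]; norm_num
  have h1 : (2 : ℝ) ^ (-2 * ((n / 4 : ℕ) : ℤ) - 1) = (1 / 4) ^ (n / 4) / 2 := by
    rw [zpow_sub₀ two_ne_zero, hq, zpow_one]
  have h2 : (2 : ℝ) ^ (-2 * ((n / 4 : ℕ) : ℤ) - 2) = (1 / 4) ^ (n / 4) / 4 := by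
    rw [zpow_sub₀ two_ne_zero, hq]; norm_num
  have hpos : (0 : ℝ) < (1 / 4) ^ (n / 4) := by positivity
  unfold SpiralP
  simp only [hq, h1, h2]
  generalize (1 / 4 : ℝ) ^ (n / 4) = q at hpos
  split_ifs <;> fin_cases j <;> simp [abs_div, abs_of_pos hpos] <;> linarith

-- `(3/4)^4 ≥ 1/4`, and `3 ≥ (4/3)^3` absorbs the remainder `n % 4 ≤ 3`.
lemma one_quarter_pow_div_four_le (n : ℕ) : (1 / 4 : ℝ) ^ (n / 4) ≤ 3 * (3 / 4) ^ n := by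
  have h1 : (1 / 4 : ℝ) ^ (n / 4) ≤ (3 / 4) ^ (4 * (n / 4)) := by
    rw [pow_mul]; gcongr; norm_num
  have h2 : (3 / 4 : ℝ) ^ (4 * (n / 4) + 3) ≤ (3 / 4) ^ n :=
    pow_le_pow_of_le_one (by norm_num) (by norm_num) (by omega)
  rw [pow_add] at h2
  nlinarith [pow_nonneg (by norm_num : (0 : ℝ) ≤ 3 / 4) (4 * (n / 4))]

lemma summable_abs_spiralP (j : Fin 2) : Summable fun n => |SpiralP n j| :=
  ((summable_geometric_of_lt_one (by norm_num) (by norm_num)).mul_left 3).of_nonneg_of_le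
    (fun _ => abs_nonneg _) fun n => (abs_spiralP_le n j).trans (one_quarter_pow_div_four_le n)

theorem IsSpiral.eqOn_dyadicSeries {u : ℝ → Fin 2 → ℝ} (hu : IsSpiral u) (j : Fin 2) :
    EqOn (fun t => u t j) (dyadicSeries fun n => SpiralP n j - SpiralP (n + 1) j) (Icc 0 1) := by
  rintro t ⟨ht0, ht1⟩
  dsimp only
  rcases ht0.eq_or_lt with rfl | ht0
  · simp [hu.1, dyadicSeries_apply_zero]
  obtain ⟨n, s, hs, rfl⟩ := exists_eq_one_add_div_two_pow ⟨ht0, ht1⟩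
  have hvertex := congrFun (hu.2 n s hs) j
  rw [one_sub_mul_add_mul_two_zpow] at hvertex
  rw [hvertex, dyadicSeries_sub_succ_apply (summable_abs_sub_succ (summable_abs_spiralP j))
    (summable_abs_spiralP j).of_abs.tendsto_atTop_zero n hs]

theorem spiral_boundedVariation (u : ℝ → Fin 2 → ℝ) (hu : IsSpiral u) :
    BoundedVariationOn u (Set.Icc 0 1) ∧
    ∀ j : Fin 2, ∃ m mbar : ℝ → ℝ,
      ContinuousOn m (Set.Icc 0 1) ∧ ContinuousOn mbar (Set.Icc 0 1) ∧
      MonotoneOn m (Set.Icc 0 1) ∧ MonotoneOn mbar (Set.Icc 0 1) ∧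
      m 0 = 0 ∧ mbar 0 = 0 ∧
      ∀ t ∈ Set.Icc (0:ℝ) 1, u t j = m t - mbar t := by
  have hdec : ∀ j : Fin 2, ∃ m mbar : ℝ → ℝ, Continuous m ∧ Continuous mbar ∧
      Monotone m ∧ Monotone mbar ∧ m 0 = 0 ∧ mbar 0 = 0 ∧
      EqOn (fun t => u t j) (m - mbar) (Icc 0 1) := fun j => by
    obtain ⟨m, mbar, hmc, hmbc, hm, hmb, hm0, hmb0, heq⟩ :=
      exists_continuous_monotone_sub_eq_dyadicSeries
        (summable_abs_sub_succ (summable_abs_spiralP j))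
    exact ⟨m, mbar, hmc, hmbc, hm, hmb, hm0, hmb0, heq ▸ hu.eqOn_dyadicSeries j⟩
  refine ⟨BoundedVariationOn.pi fun j => ?_, fun j => ?_⟩ <;>
    obtain ⟨m, mbar, hmc, hmbc, hm, hmb, hm0, hmb0, heq⟩ := hdec j
  · rw [BoundedVariationOn, eVariationOn.congr heq]
    exact (hm.boundedVariationOn_Icc 0 1).sub (hmb.boundedVariationOn_Icc 0 1)
  · exact ⟨m, mbar, hmc.continuousOn, hmbc.continuousOn, hm.monotoneOn _, hmb.monotoneOn _,
      hm0, hmb0, heq⟩
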